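/- arXiv:0812.4167 — 2 statements merged into one kernel-verified Lean document; each statement's English description precedes it below -/
import Mathlib

section
/- Let ρ be a separable state on H = H_A ⊗ H_B with operator Schmidt coefficients {μ_a}_{a=1}^{d} and Schmidt rank R (the number of nonzero Schmidt coefficients). Then for every 1 ≤ l ≤ d the elementary symmetric polynomial of degree l satisfies: M^[l](|ρ̃|) ≤ C(R, l) · (1/R)^l if l ≤ R, and M^[l](|ρ̃|) = 0 if l > R. -/
/-!
The realignment criterion bounds the sum of the Schmidt coefficients of a separable state by `1`:
for a product of density operators `σ ⊗ τ`, Bessel's inequality and Cauchy–Schwarz give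
`∑ₐ |⟨Eₐ, σ⟩| |⟨Fₐ, τ⟩| ≤ ‖σ‖₂ ‖τ‖₂ ≤ 1`, and the bound passes to convex combinations.
Only the `R` nonzero coefficients contribute to `M^[l]`, so it vanishes for `l > R`, and for
`l ≤ R` Maclaurin's inequality `e_l(x) ≤ C(R, l) (∑ x / R)^l` for nonnegative `x` finishes the
proof. Maclaurin's inequality follows by induction from `(k + 1) R e_{k+1} ≤ (R - k) e₁ e_k`,
which after double counting `k`- and `(k + 1)`-subsets reduces to
`∑_{i ≠ j ∈ U} x_i x_j ≤ (|U| - 1) ∑_{i ∈ U} x_i²`.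
-/

open scoped Kronecker ComplexOrder
open Matrix Finset

/-- Hilbert-Schmidt inner product on matrices. -/
noncomputable def hsInner {n : Type*} [Fintype n] (A B : Matrix n n ℂ) : ℂ :=
  (Aᴴ * B).trace

/-- Hilbert-Schmidt norm. -/
noncomputable def hsNorm {n : Type*} [Fintype n] (A : Matrix n n ℂ) : ℝ :=
  Real.sqrt (hsInner A A).re

/-- A density operator: positive semidefinite with unit trace. -/
def IsDensity {n : Type*} [Fintype n] (ρ : Matrix n n ℂ) : Prop :=
  ρ.PosSemidef ∧ ρ.trace = 1

/-- A separable bipartite state: a convex combination of product density operators. -/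
def IsSeparableState {NA NB : ℕ} (ρ : Matrix (Fin NA × Fin NB) (Fin NA × Fin NB) ℂ) : Prop :=
  ∃ (m : ℕ) (p : Fin m → ℝ)
    (ρA : Fin m → Matrix (Fin NA) (Fin NA) ℂ) (ρB : Fin m → Matrix (Fin NB) (Fin NB) ℂ),
    (∀ i, 0 < p i) ∧ (∑ i, p i = 1) ∧ (∀ i, IsDensity (ρA i)) ∧ (∀ i, IsDensity (ρB i)) ∧
    ρ = ∑ i, (p i : ℂ) • (ρA i ⊗ₖ ρB i)

/-- An operator Schmidt decomposition of a bipartite operator `C`: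
`C = ∑ a, μ a • (E a ⊗ₖ F a)` with `μ a ≥ 0` and `E`, `F` orthonormal families
with respect to the Hilbert-Schmidt inner product. -/
def SchmidtDecomp {NA NB : ℕ} (C : Matrix (Fin NA × Fin NB) (Fin NA × Fin NB) ℂ)
    (μ : Fin (min (NA ^ 2) (NB ^ 2)) → ℝ)
    (E : Fin (min (NA ^ 2) (NB ^ 2)) → Matrix (Fin NA) (Fin NA) ℂ)
    (F : Fin (min (NA ^ 2) (NB ^ 2)) → Matrix (Fin NB) (Fin NB) ℂ) : Prop :=
  (∀ a, 0 ≤ μ a) ∧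
  (∀ a b, hsInner (E a) (E b) = if a = b then 1 else 0) ∧
  (∀ a b, hsInner (F a) (F b) = if a = b then 1 else 0) ∧
  C = ∑ a, (μ a : ℂ) • (E a ⊗ₖ F a)

section HilbertSchmidt

variable {n m ι : Type*} [Fintype n] [Fintype m]

theorem hsInner_sum_smul (A : Matrix n n ℂ) (s : Finset ι) (c : ι → ℂ) (B : ι → Matrix n n ℂ) :
    hsInner A (∑ i ∈ s, c i • B i) = ∑ i ∈ s, c i * hsInner A (B i) := by
  simp [hsInner, Matrix.mul_sum, trace_sum]

theorem hsInner_kronecker (A C : Matrix n n ℂ) (B D : Matrix m m ℂ) :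
    hsInner (A ⊗ₖ B) (C ⊗ₖ D) = hsInner A C * hsInner B D := by
  rw [hsInner, conjTranspose_kronecker, ← mul_kronecker_mul, trace_kronecker]
  rfl

theorem inner_toLp_vec (A B : Matrix n n ℂ) :
    inner ℂ (WithLp.toLp 2 A.vec) (WithLp.toLp 2 B.vec) = hsInner A B := by
  rw [EuclideanSpace.inner_toLp_toLp, dotProduct_comm, star_vec_dotProduct_vec]
  rfl

theorem sum_norm_hsInner_sq_le [Fintype ι] [DecidableEq ι] {E : ι → Matrix n n ℂ}
    (hE : ∀ a b, hsInner (E a) (E b) = if a = b then 1 else 0) (X : Matrix n n ℂ) :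
    ∑ a, ‖hsInner (E a) X‖ ^ 2 ≤ (hsInner X X).re := by
  have hON : Orthonormal ℂ fun a => WithLp.toLp 2 (E a).vec := by
    simpa only [orthonormal_iff_ite, inner_toLp_vec] using hE
  simpa only [inner_toLp_vec, ← inner_self_eq_norm_sq (𝕜 := ℂ), RCLike.re_to_complex] using
    hON.sum_inner_products_le (s := univ) (WithLp.toLp 2 X.vec)

open scoped Matrix.Norms.Frobenius in
theorem frobenius_norm_sq_eq_re_hsInner (A : Matrix n n ℂ) : ‖A‖ ^ 2 = (hsInner A A).re := by
  change ‖WithLp.toLp 2 fun i => WithLp.toLp 2 fun j => A i j‖ ^ 2 = _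
  simp only [EuclideanSpace.norm_sq_eq, PiLp.norm_sq_eq_of_L2, hsInner, trace, diag_apply,
    mul_apply, conjTranspose_apply, Complex.re_sum]
  rw [sum_comm]
  refine sum_congr rfl fun i _ => sum_congr rfl fun j _ => ?_
  simp [← Complex.normSq_eq_norm_sq, Complex.normSq_apply]

open scoped MatrixOrder Matrix.Norms.Frobenius in
theorem Matrix.PosSemidef.re_hsInner_self_le [DecidableEq n] {ρ : Matrix n n ℂ}
    (hρ : ρ.PosSemidef) : (hsInner ρ ρ).re ≤ ρ.trace.re ^ 2 := by
  -- `ρ = Bᴴ B`, and `‖Bᴴ B‖₂ ≤ ‖B‖₂² = tr ρ` for the Frobenius norm `‖·‖₂`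
  obtain ⟨B, rfl⟩ := CStarAlgebra.nonneg_iff_eq_star_mul_self.mp hρ.nonneg
  have hmul := frobenius_norm_mul Bᴴ B
  rw [frobenius_norm_conjTranspose] at hmul
  rw [star_eq_conjTranspose, ← frobenius_norm_sq_eq_re_hsInner]
  change _ ≤ (hsInner B B).re ^ 2
  rw [← frobenius_norm_sq_eq_re_hsInner]
  nlinarith [norm_nonneg (Bᴴ * B)]

theorem IsDensity.re_hsInner_self_le_one [DecidableEq n] {ρ : Matrix n n ℂ} (hρ : IsDensity ρ) :
    (hsInner ρ ρ).re ≤ 1 := by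
  simpa [hρ.2] using hρ.1.re_hsInner_self_le

theorem IsDensity.sum_norm_hsInner_mul_norm_hsInner_le_one [DecidableEq n] [DecidableEq m]
    [Fintype ι] [DecidableEq ι] {σ : Matrix n n ℂ} {τ : Matrix m m ℂ} (hσ : IsDensity σ)
    (hτ : IsDensity τ) {E : ι → Matrix n n ℂ} {F : ι → Matrix m m ℂ}
    (hE : ∀ a b, hsInner (E a) (E b) = if a = b then 1 else 0)
    (hF : ∀ a b, hsInner (F a) (F b) = if a = b then 1 else 0) :
    ∑ a, ‖hsInner (E a) σ‖ * ‖hsInner (F a) τ‖ ≤ 1 := by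
  calc ∑ a, ‖hsInner (E a) σ‖ * ‖hsInner (F a) τ‖
      ≤ √(∑ a, ‖hsInner (E a) σ‖ ^ 2) * √(∑ a, ‖hsInner (F a) τ‖ ^ 2) :=
        Real.sum_mul_le_sqrt_mul_sqrt _ _ _
    _ ≤ √1 * √1 := by
        gcongr
        · exact (sum_norm_hsInner_sq_le hE σ).trans hσ.re_hsInner_self_le_one
        · exact (sum_norm_hsInner_sq_le hF τ).trans hτ.re_hsInner_self_le_one
    _ = 1 := by simp

end HilbertSchmidt

section Separable

variable {NA NB : ℕ} {ρ : Matrix (Fin NA × Fin NB) (Fin NA × Fin NB) ℂ}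

/-- The realignment criterion. -/
theorem IsSeparableState.sum_norm_hsInner_kronecker_le_one {ι : Type*} [Fintype ι]
    [DecidableEq ι] (hρ : IsSeparableState ρ)
    {E : ι → Matrix (Fin NA) (Fin NA) ℂ} {F : ι → Matrix (Fin NB) (Fin NB) ℂ}
    (hE : ∀ a b, hsInner (E a) (E b) = if a = b then 1 else 0)
    (hF : ∀ a b, hsInner (F a) (F b) = if a = b then 1 else 0) :
    ∑ a, ‖hsInner (E a ⊗ₖ F a) ρ‖ ≤ 1 := by
  obtain ⟨m, p, ρA, ρB, hp, hp1, hA, hB, rfl⟩ := hρ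
  calc ∑ a, ‖hsInner (E a ⊗ₖ F a) (∑ i, (p i : ℂ) • (ρA i ⊗ₖ ρB i))‖
      ≤ ∑ a, ∑ i, p i * (‖hsInner (E a) (ρA i)‖ * ‖hsInner (F a) (ρB i)‖) := by
        refine sum_le_sum fun a _ => ?_
        rw [hsInner_sum_smul]
        refine (norm_sum_le _ _).trans_eq (sum_congr rfl fun i _ => ?_)
        rw [hsInner_kronecker, norm_mul, norm_mul, Complex.norm_real,
          Real.norm_of_nonneg (hp i).le]
    _ = ∑ i, p i * ∑ a, ‖hsInner (E a) (ρA i)‖ * ‖hsInner (F a) (ρB i)‖ := by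
        simp only [mul_sum]
        exact sum_comm
    _ ≤ ∑ i, p i * 1 := sum_le_sum fun i _ => mul_le_mul_of_nonneg_left
        ((hA i).sum_norm_hsInner_mul_norm_hsInner_le_one (hB i) hE hF) (hp i).le
    _ = 1 := by simp [hp1]

variable {μ : Fin (min (NA ^ 2) (NB ^ 2)) → ℝ}
  {E : Fin (min (NA ^ 2) (NB ^ 2)) → Matrix (Fin NA) (Fin NA) ℂ}
  {F : Fin (min (NA ^ 2) (NB ^ 2)) → Matrix (Fin NB) (Fin NB) ℂ}

theorem SchmidtDecomp.hsInner_kronecker_eq (hS : SchmidtDecomp ρ μ E F)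
    (a : Fin (min (NA ^ 2) (NB ^ 2))) :
    hsInner (E a ⊗ₖ F a) ρ = μ a := by
  obtain ⟨-, hE, hF, rfl⟩ := hS
  rw [hsInner_sum_smul, sum_eq_single a]
  · simp [hsInner_kronecker, hE, hF]
  · intro b _ hba
    simp [hsInner_kronecker, hE, hF, hba.symm]
  · simp

theorem SchmidtDecomp.sum_le_one_of_isSeparableState (hS : SchmidtDecomp ρ μ E F)
    (hρ : IsSeparableState ρ) : ∑ a, μ a ≤ 1 := by
  calc ∑ a, μ a = ∑ a, ‖hsInner (E a ⊗ₖ F a) ρ‖ := sum_congr rfl fun a _ => by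
        rw [hS.hsInner_kronecker_eq, Complex.norm_real, Real.norm_of_nonneg (hS.1 a)]
    _ ≤ 1 := hρ.sum_norm_hsInner_kronecker_le_one hS.2.1 hS.2.2.1

end Separable

section ElementarySymmetric

variable {ι R : Type*}

theorem Finset.esymm_map_val_univ_eq [CommSemiring R] [Fintype ι] {x : ι → R} {T : Finset ι}
    (hx : ∀ i ∉ T, x i = 0) (k : ℕ) :
    (univ.val.map x).esymm k = (T.val.map x).esymm k := by
  rw [esymm_map_val, esymm_map_val]
  refine (sum_subset (powersetCard_mono (subset_univ T)) fun s hs hsT => ?_).symm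
  obtain ⟨i, his, hiT⟩ := not_subset.mp fun h => hsT (mem_powersetCard.mpr
    ⟨h, (mem_powersetCard.mp hs).2⟩)
  exact prod_eq_zero his (hx i hiT)

variable [DecidableEq ι]

theorem Finset.sum_powersetCard_succ_sum {M : Type*} [AddCommMonoid M] (T : Finset ι) (k : ℕ)
    (h : ι → Finset ι → M) :
    ∑ s ∈ T.powersetCard (k + 1), ∑ i ∈ s, h i s =
      ∑ t ∈ T.powersetCard k, ∑ i ∈ T \ t, h i (insert i t) := by
  rw [sum_sigma', sum_sigma']
  refine sum_nbij' (fun p => ⟨p.1.erase p.2, p.2⟩) (fun p => ⟨insert p.2 p.1, p.2⟩)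
    ?_ ?_ ?_ ?_ ?_
  · rintro ⟨s, i⟩ hs
    simp only [mem_sigma, mem_powersetCard] at hs ⊢
    obtain ⟨⟨hsT, hcard⟩, hi⟩ := hs
    exact ⟨⟨(erase_subset i s).trans hsT, by rw [card_erase_of_mem hi, hcard]; rfl⟩,
      mem_sdiff.mpr ⟨hsT hi, notMem_erase i s⟩⟩
  · rintro ⟨t, i⟩ ht
    simp only [mem_sigma, mem_powersetCard, mem_sdiff] at ht ⊢
    obtain ⟨⟨htT, hcard⟩, hiT, hit⟩ := ht
    exact ⟨⟨insert_subset hiT htT, by rw [card_insert_of_notMem hit, hcard]⟩, mem_insert_self i t⟩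
  · rintro ⟨s, i⟩ hs
    simp only [mem_sigma] at hs
    simp [insert_erase hs.2]
  · rintro ⟨t, i⟩ ht
    simp only [mem_sigma, mem_sdiff] at ht
    simp [erase_insert ht.2.2]
  · rintro ⟨s, i⟩ hs
    simp only [mem_sigma] at hs
    rw [insert_erase hs.2]

section CommSemiring

variable [CommSemiring R] (x : ι → R) (T : Finset ι)

theorem Finset.sum_powersetCard_succ_sum_mul_prod (k : ℕ) (w : ι → Finset ι → R) :
    ∑ s ∈ T.powersetCard (k + 1), (∑ i ∈ s, w i s) * ∏ a ∈ s, x a =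
      ∑ t ∈ T.powersetCard k, (∑ i ∈ T \ t, w i (insert i t) * x i) * ∏ a ∈ t, x a := by
  simp only [sum_mul]
  rw [sum_powersetCard_succ_sum]
  refine sum_congr rfl fun t _ => sum_congr rfl fun i hi => ?_
  rw [prod_insert (mem_sdiff.mp hi).2]
  ring

theorem Finset.succ_mul_esymm_succ (k : ℕ) :
    ((k : R) + 1) * (T.val.map x).esymm (k + 1) =
      ∑ t ∈ T.powersetCard k, (∑ i ∈ T \ t, x i) * ∏ a ∈ t, x a := by
  have h := sum_powersetCard_succ_sum_mul_prod x T k (fun _ _ => 1)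
  simp only [one_mul] at h
  rw [← h, esymm_map_val, mul_sum]
  refine sum_congr rfl fun s hs => ?_
  rw [sum_const, (mem_powersetCard.mp hs).2, nsmul_one]
  push_cast
  rfl

theorem Finset.sum_mul_esymm (k : ℕ) :
    (∑ i ∈ T, x i) * (T.val.map x).esymm k =
      ((k : R) + 1) * (T.val.map x).esymm (k + 1) +
        ∑ s ∈ T.powersetCard k, (∑ i ∈ s, x i) * ∏ a ∈ s, x a := by
  rw [succ_mul_esymm_succ, esymm_map_val, mul_sum, ← sum_add_distrib]
  refine sum_congr rfl fun s hs => ?_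
  rw [← add_mul, sum_sdiff (mem_powersetCard.mp hs).1]

end CommSemiring

theorem Finset.sum_mul_sum_erase_le (U : Finset ι) (y : ι → ℝ) :
    ∑ i ∈ U, (∑ j ∈ U.erase i, y j) * y i ≤ ((#U : ℝ) - 1) * ∑ i ∈ U, y i * y i := by
  have hsq : (∑ i ∈ U, y i) ^ 2 = ∑ i ∈ U, y i * y i + ∑ i ∈ U, (∑ j ∈ U.erase i, y j) * y i := by
    rw [sq, sum_mul, ← sum_add_distrib]
    refine sum_congr rfl fun i hi => ?_
    rw [← add_sum_erase U y hi]
    ring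
  have := sq_sum_le_card_mul_sum_sq (s := U) (f := y)
  simp only [sq] at this hsq
  linarith

variable {x : ι → ℝ} {T : Finset ι}

theorem Finset.mul_succ_mul_esymm_succ_le (hx : ∀ i ∈ T, 0 ≤ x i) (k : ℕ) :
    (k : ℝ) * (k + 1) * (T.val.map x).esymm (k + 1) ≤
      (#T - k) * ∑ s ∈ T.powersetCard k, (∑ i ∈ s, x i) * ∏ a ∈ s, x a := by
  cases k with
  | zero => simp [esymm_map_val]
  | succ m =>
    have hpairs := sum_powersetCard_succ_sum_mul_prod x T m fun _ s => ∑ j ∈ T \ s, x j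
    have hsquares := sum_powersetCard_succ_sum_mul_prod x T m fun i _ => x i
    simp only [sdiff_insert] at hpairs
    have hesymm : ((m : ℝ) + 1) * (((m + 1 : ℕ) : ℝ) + 1) * (T.val.map x).esymm (m + 2) =
        ∑ t ∈ T.powersetCard m,
          (∑ i ∈ T \ t, (∑ j ∈ (T \ t).erase i, x j) * x i) * ∏ a ∈ t, x a := by
      rw [← hpairs, mul_assoc, succ_mul_esymm_succ, mul_sum]
      refine sum_congr rfl fun s hs => ?_
      rw [sum_const, (mem_powersetCard.mp hs).2, nsmul_eq_mul]
      push_cast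
      ring
    push_cast at hesymm ⊢
    rw [hesymm, hsquares, mul_sum]
    refine sum_le_sum fun t ht => ?_
    obtain ⟨htT, hcard⟩ := mem_powersetCard.mp ht
    have hcardU : ((#(T \ t) : ℕ) : ℝ) - 1 = #T - (m + 1) := by
      rw [card_sdiff_of_subset htT, hcard, Nat.cast_sub (hcard ▸ card_le_card htT)]
      ring
    rw [← mul_assoc, ← hcardU]
    exact mul_le_mul_of_nonneg_right (sum_mul_sum_erase_le _ x)
      (prod_nonneg fun a ha => hx a (htT ha))

theorem Finset.succ_mul_card_mul_esymm_succ_le (hx : ∀ i ∈ T, 0 ≤ x i) (k : ℕ) :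
    ((k : ℝ) + 1) * #T * (T.val.map x).esymm (k + 1) ≤
      (#T - k) * (∑ i ∈ T, x i) * (T.val.map x).esymm k := by
  have hsplit := sum_mul_esymm x T k
  have hbound := mul_succ_mul_esymm_succ_le hx k
  linear_combination hbound - (#T - k) * hsplit

/-- Maclaurin's inequality. -/
theorem Finset.esymm_le_choose_mul_pow (hx : ∀ i ∈ T, 0 ≤ x i) (k : ℕ) :
    (T.val.map x).esymm k ≤ (#T).choose k * ((∑ i ∈ T, x i) / #T) ^ k := by
  induction k with
  | zero => simp [esymm_map_val]
  | succ k ih =>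
    rcases lt_or_ge #T (k + 1) with hlt | hle
    · rw [esymm_map_val, powersetCard_eq_empty.mpr hlt, Nat.choose_eq_zero_of_lt hlt]
      simp
    have hn : (0 : ℝ) < #T := by exact_mod_cast (k.succ_pos.trans_le hle)
    have hsum : ∑ i ∈ T, x i = #T * ((∑ i ∈ T, x i) / #T) := (mul_div_cancel₀ _ hn.ne').symm
    generalize (∑ i ∈ T, x i) / #T = a at ih hsum ⊢
    have hchoose : ((#T).choose (k + 1) : ℝ) * (k + 1) = (#T).choose k * (#T - k) := by
      have := congrArg (Nat.cast (R := ℝ)) (Nat.choose_succ_right_eq #T k)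
      push_cast [Nat.cast_sub (k.le_succ.trans hle)] at this
      exact this
    refine le_of_mul_le_mul_left ?_ (by positivity : (0 : ℝ) < (k + 1) * #T)
    calc ((k : ℝ) + 1) * #T * (T.val.map x).esymm (k + 1)
        ≤ (#T - k) * (∑ i ∈ T, x i) * (T.val.map x).esymm k :=
          succ_mul_card_mul_esymm_succ_le hx k
      _ ≤ (#T - k) * (∑ i ∈ T, x i) * ((#T).choose k * a ^ k) := by
          have hk : (k : ℝ) ≤ #T := by exact_mod_cast k.le_succ.trans hle
          exact mul_le_mul_of_nonneg_left ih (mul_nonneg (sub_nonneg.2 hk) (sum_nonneg hx))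
      _ = (k + 1) * #T * ((#T).choose (k + 1) * a ^ (k + 1)) := by
          rw [hsum]
          linear_combination (-(#T * a ^ (k + 1))) * hchoose

end ElementarySymmetric

theorem stmt11_esymm_schmidt_rank_bound_general {NA NB : ℕ}
    (ρ : Matrix (Fin NA × Fin NB) (Fin NA × Fin NB) ℂ)
    (hsep : IsSeparableState ρ)
    (μ : Fin (min (NA ^ 2) (NB ^ 2)) → ℝ)
    (E : Fin (min (NA ^ 2) (NB ^ 2)) → Matrix (Fin NA) (Fin NA) ℂ)
    (F : Fin (min (NA ^ 2) (NB ^ 2)) → Matrix (Fin NB) (Fin NB) ℂ)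
    (hS : SchmidtDecomp ρ μ E F)
    (R : ℕ) (hR : R = (Finset.univ.filter (fun a => μ a ≠ 0)).card) :
    ∀ l : ℕ, 1 ≤ l → l ≤ min (NA ^ 2) (NB ^ 2) →
      (l ≤ R →
        ∑ s ∈ Finset.univ.powersetCard l, ∏ a ∈ s, μ a
          ≤ (R.choose l : ℝ) * (1 / (R : ℝ)) ^ l) ∧
      (R < l → ∑ s ∈ Finset.univ.powersetCard l, ∏ a ∈ s, μ a = 0) := by
  intro l _ _
  set T := univ.filter fun a => μ a ≠ 0
  have hsupp : ∀ a ∉ T, μ a = 0 := by simp [T]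
  have hM : ∑ s ∈ univ.powersetCard l, ∏ a ∈ s, μ a = (T.val.map μ).esymm l := by
    rw [← esymm_map_val, esymm_map_val_univ_eq hsupp]
  subst hR
  refine ⟨fun _ => ?_, fun hlt => ?_⟩
  · have hsum : ∑ a ∈ T, μ a ≤ 1 :=
      (sum_filter_ne_zero _).trans_le (hS.sum_le_one_of_isSeparableState hsep)
    rw [hM]
    refine (esymm_le_choose_mul_pow (fun a _ => hS.1 a) l).trans ?_
    have hsum_nonneg : 0 ≤ ∑ a ∈ T, μ a := sum_nonneg fun a _ => hS.1 a
    gcongr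
  · rw [hM, esymm_map_val, powersetCard_eq_empty.mpr hlt, sum_empty]

/-- Refinement of the symmetric-polynomial bounds taking the Schmidt rank R into account:
for a separable state, M^[l] ≤ C(R,l)(1/R)^l if l ≤ R, and M^[l] = 0 if l > R. -/
theorem stmt11_esymm_schmidt_rank_bound {NA NB : ℕ} (hA : 2 ≤ NA) (hB : 2 ≤ NB)
    (ρ : Matrix (Fin NA × Fin NB) (Fin NA × Fin NB) ℂ)
    (hsep : IsSeparableState ρ)
    (μ : Fin (min (NA ^ 2) (NB ^ 2)) → ℝ)
    (E : Fin (min (NA ^ 2) (NB ^ 2)) → Matrix (Fin NA) (Fin NA) ℂ)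
    (F : Fin (min (NA ^ 2) (NB ^ 2)) → Matrix (Fin NB) (Fin NB) ℂ)
    (hS : SchmidtDecomp ρ μ E F)
    (R : ℕ) (hR : R = (Finset.univ.filter (fun a => μ a ≠ 0)).card) :
    ∀ l : ℕ, 1 ≤ l → l ≤ min (NA ^ 2) (NB ^ 2) →
      (l ≤ R →
        ∑ s ∈ Finset.univ.powersetCard l, ∏ a ∈ s, μ a
          ≤ (R.choose l : ℝ) * (1 / (R : ℝ)) ^ l) ∧
      (R < l → ∑ s ∈ Finset.univ.powersetCard l, ∏ a ∈ s, μ a = 0) :=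
  stmt11_esymm_schmidt_rank_bound_general ρ hsep μ E F hS R hR
end

section
/- (n = 2 case of the main theorem) Let 𝔈_1^A, 𝔈_2^A : L(H_A) → L(H_A) and 𝔈_1^B, 𝔈_2^B : L(H_B) → L(H_B) be maps that are either all complex-linear or all conjugate-linear, satisfying for some ε^A, ε^B ≥ 0: ‖𝔈_1^A(σ_1)‖_HS² + ‖𝔈_2^A(σ_2)‖_HS² ≤ 2ε^A for all density operators σ_1, σ_2 on H_A, and the analogous bound with ε^B on H_B. Define, for a state ρ with marginals ρ_A, ρ_B, the operator 𝔈(ρ) := (1/2)(𝔈_1^A ⊗ 𝔈_1^B + 𝔈_2^A ⊗ 𝔈_2^B)(ρ) + (1/2)(𝔈_1^A ⊗ 𝔈_2^B + 𝔈_2^A ⊗ 𝔈_1^B)(ρ_A ⊗ ρ_B). Then for every separable state ρ: ‖𝔈(ρ)‖_CCN ≤ √(ε^A + (1/2)(⟨𝔈_1^A(ρ_A), 𝔈_2^A(ρ_A)⟩_HS + conj.)) · √(ε^B + (1/2)(⟨𝔈_1^B(ρ_B), 𝔈_2^B(ρ_B)⟩_HS + conj.)). -/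
/-!
Write `ρ = ∑ᵢ pᵢ ρᵢᴬ ⊗ ρᵢᴮ`, `aₖ i = 𝔈ₖᴬ(ρᵢᴬ)`, `bₖ i = 𝔈ₖᴮ(ρᵢᴮ)`, `āₖ = ∑ᵢ pᵢ aₖ i`,
`d = a₁ - a₂` and `e = b₁ - b₂`. Since `σ` fixes the real weights, the maps send the marginals
to `āₖ`, `b̄ₖ`, and for every pairing `⊗` that is bilinear over the real weights
  `𝔈(ρ) = ∑ᵢ pᵢ/4 (a₁ + a₂)ᵢ ⊗ (b₁ + b₂)ᵢ + 1/4 (ā₁ + ā₂) ⊗ (b̄₁ + b̄₂)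
          + ∑ᵢⱼ pᵢpⱼ/8 (dᵢ - dⱼ) ⊗ (eᵢ - eⱼ)`,
a sum `∑ₖ wₖ uₖ ⊗ vₖ` with `wₖ ≥ 0`. Hence `‖𝔈(ρ)‖_CCN ≤ ∑ₖ wₖ ‖uₖ‖ ‖vₖ‖`, which by
Cauchy–Schwarz is at most `√(∑ₖ wₖ ‖uₖ‖²) √(∑ₖ wₖ ‖vₖ‖²)`. The same identity for the
Hilbert–Schmidt pairing evaluates `∑ₖ wₖ ‖uₖ‖² = ∑ᵢ pᵢ/2 (‖a₁ i‖² + ‖a₂ i‖²) + Re ⟨ā₁, ā₂⟩`,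
and the hypothesis bounds the first term by `εᴬ`.
-/

open scoped Kronecker ComplexOrder
open Matrix Finset

/-- The computable cross norm (CCN) on bipartite operators. -/
noncomputable def ccn {NA NB : ℕ} (C : Matrix (Fin NA × Fin NB) (Fin NA × Fin NB) ℂ) : ℝ :=
  sInf { r : ℝ | ∃ (n : ℕ) (A : Fin n → Matrix (Fin NA) (Fin NA) ℂ)
    (B : Fin n → Matrix (Fin NB) (Fin NB) ℂ),
    C = ∑ k, A k ⊗ₖ B k ∧ r = ∑ k, hsNorm (A k) * hsNorm (B k) }

/-- The action of the tensor product `F ⊗ G` of two (jointly linear or conjugate-linear)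
superoperators on a bipartite operator, written in terms of matrix blocks. -/
noncomputable def tensorApply {NA NB : ℕ} {σ : ℂ →+* ℂ}
    (F : Matrix (Fin NA) (Fin NA) ℂ →ₛₗ[σ] Matrix (Fin NA) (Fin NA) ℂ)
    (G : Matrix (Fin NB) (Fin NB) ℂ →ₛₗ[σ] Matrix (Fin NB) (Fin NB) ℂ)
    (M : Matrix (Fin NA × Fin NB) (Fin NA × Fin NB) ℂ) :
    Matrix (Fin NA × Fin NB) (Fin NA × Fin NB) ℂ :=
  ∑ b : Fin NB, ∑ b' : Fin NB,
    (F (Matrix.of fun i i' => M (i, b) (i', b'))) ⊗ₖ (G (Matrix.single b b' 1))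

/-- The marginal (reduced density operator) of a bipartite operator on the A-side. -/
noncomputable def margA {NA NB : ℕ} (ρ : Matrix (Fin NA × Fin NB) (Fin NA × Fin NB) ℂ) :
    Matrix (Fin NA) (Fin NA) ℂ :=
  Matrix.of fun i i' => ∑ b : Fin NB, ρ (i, b) (i', b)

/-- The marginal (reduced density operator) of a bipartite operator on the B-side. -/
noncomputable def margB {NA NB : ℕ} (ρ : Matrix (Fin NA × Fin NB) (Fin NA × Fin NB) ℂ) :
    Matrix (Fin NB) (Fin NB) ℂ :=
  Matrix.of fun b b' => ∑ i : Fin NA, ρ (i, b) (i, b')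

section HilbertSchmidt
variable {n : Type*} [Fintype n]

theorem hsInner_add_left (A B C : Matrix n n ℂ) :
    hsInner (A + B) C = hsInner A C + hsInner B C := by
  simp only [hsInner, conjTranspose_add, Matrix.add_mul, trace_add]

theorem hsInner_smul_left (c : ℂ) (A B : Matrix n n ℂ) :
    hsInner (c • A) B = starRingEnd ℂ c • hsInner A B := by
  simp only [hsInner, conjTranspose_smul, Matrix.smul_mul, trace_smul]; rfl

theorem hsInner_add_right (A B C : Matrix n n ℂ) :
    hsInner A (B + C) = hsInner A B + hsInner A C := by
  simp only [hsInner, Matrix.mul_add, trace_add]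

theorem hsInner_smul_right (c : ℂ) (A B : Matrix n n ℂ) : hsInner A (c • B) = c • hsInner A B := by
  simp only [hsInner, Matrix.mul_smul, trace_smul]

noncomputable def hsInnerₛₗ : Matrix n n ℂ →ₗ⋆[ℂ] Matrix n n ℂ →ₗ[ℂ] ℂ :=
  LinearMap.mk₂'ₛₗ _ _ hsInner hsInner_add_left hsInner_smul_left hsInner_add_right
    hsInner_smul_right

@[simp] theorem hsInnerₛₗ_apply (A B : Matrix n n ℂ) : hsInnerₛₗ A B = hsInner A B := rfl

theorem hsInner_comm (A B : Matrix n n ℂ) : hsInner B A = starRingEnd ℂ (hsInner A B) := by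
  rw [hsInner, hsInner, Complex.star_def.symm, ← trace_conjTranspose, conjTranspose_mul,
    conjTranspose_conjTranspose]

theorem re_hsInner_self_nonneg (A : Matrix n n ℂ) : 0 ≤ (hsInner A A).re :=
  (Complex.le_def.mp (posSemidef_conjTranspose_mul_self A).trace_nonneg).1

theorem hsNorm_nonneg (A : Matrix n n ℂ) : 0 ≤ hsNorm A := Real.sqrt_nonneg _

theorem hsNorm_sq (A : Matrix n n ℂ) : hsNorm A ^ 2 = (hsInner A A).re :=
  Real.sq_sqrt (re_hsInner_self_nonneg A)

theorem hsNorm_smul (c : ℂ) (A : Matrix n n ℂ) : hsNorm (c • A) = ‖c‖ * hsNorm A := by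
  rw [hsNorm, hsInner_smul_left, hsInner_smul_right, smul_smul, smul_eq_mul, Complex.conj_mul',
    ← Complex.ofReal_pow, Complex.re_ofReal_mul, Real.sqrt_mul (sq_nonneg _),
    Real.sqrt_sq (norm_nonneg c), hsNorm]

end HilbertSchmidt

section Mixing
variable {ι : Type*} {M N P : Type*} [AddCommGroup M] [Module ℂ M]
  [AddCommGroup N] [Module ℂ N] [AddCommGroup P] [Module ℂ P]

noncomputable def mixWeight (p : ι → ℝ) : ι ⊕ Unit ⊕ ι × ι → ℝ :=
  Sum.elim (fun i => p i / 4) (Sum.elim (fun _ => 1 / 4) fun ij => p ij.1 * p ij.2 / 8)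

theorem mixWeight_nonneg {p : ι → ℝ} (hp₀ : ∀ i, 0 ≤ p i) (k : ι ⊕ Unit ⊕ ι × ι) :
    0 ≤ mixWeight p k := by
  rcases k with i | _ | ⟨i, j⟩
  · exact div_nonneg (hp₀ i) (by norm_num)
  · norm_num [mixWeight]
  · exact div_nonneg (mul_nonneg (hp₀ i) (hp₀ j)) (by norm_num)

variable [Fintype ι]

noncomputable def weightedSum (p : ι → ℝ) (x : ι → M) : M := ∑ i, (p i : ℂ) • x i

theorem weightedSum_add (p : ι → ℝ) (x y : ι → M) :
    weightedSum p (x + y) = weightedSum p x + weightedSum p y := by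
  simp only [weightedSum, Pi.add_apply, smul_add, Finset.sum_add_distrib]

theorem weightedSum_sub (p : ι → ℝ) (x y : ι → M) :
    weightedSum p (x - y) = weightedSum p x - weightedSum p y := by
  simp only [weightedSum, Pi.sub_apply, smul_sub, Finset.sum_sub_distrib]

theorem map_weightedSum {τ : ℂ →+* ℂ} (hτ : ∀ r : ℝ, τ r = r) (f : M →ₛₗ[τ] N) (p : ι → ℝ)
    (x : ι → M) : f (weightedSum p x) = weightedSum p (f ∘ x) := by
  simp only [weightedSum, map_sum, map_smulₛₗ, hτ, Function.comp_apply]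

variable {τ : ℂ →+* ℂ} (β : M →ₛₗ[τ] N →ₗ[ℂ] P)

theorem apply_weightedSum_weightedSum (hτ : ∀ r : ℝ, τ r = r) (p q : ι → ℝ) (x : ι → M)
    (y : ι → N) :
    β (weightedSum p x) (weightedSum q y) = ∑ i, ∑ j, (p i * q j : ℂ) • β (x i) (y j) := by
  simp only [weightedSum, map_sum, map_smulₛₗ, hτ, LinearMap.sum_apply, LinearMap.smul_apply,
    Finset.smul_sum, smul_smul, RingHom.id_apply]
  rw [Finset.sum_comm]
  simp_rw [mul_comm]

/-- Polarisation of `∑ i j, p i p j ‖x i - x j‖² = 2 (∑ i, p i ‖x i‖² - ‖∑ i, p i x i‖²)`. -/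
theorem sum_sum_smul_apply_sub_sub (hτ : ∀ r : ℝ, τ r = r) {p : ι → ℝ} (hp : ∑ i, p i = 1)
    (x : ι → M) (y : ι → N) :
    ∑ i, ∑ j, (p i * p j : ℂ) • β (x i - x j) (y i - y j)
      = (2 : ℂ) • (∑ i, (p i : ℂ) • β (x i) (y i) - β (weightedSum p x) (weightedSum p y)) := by
  have hpc : ∑ i, (p i : ℂ) = 1 := by exact_mod_cast hp
  have diag : ∑ i, ∑ j, (p i * p j : ℂ) • β (x i) (y i) = ∑ i, (p i : ℂ) • β (x i) (y i) := by
    simp only [← smul_smul, ← Finset.smul_sum, ← Finset.sum_smul, hpc, one_smul]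
  have diag' : ∑ i, ∑ j, (p i * p j : ℂ) • β (x j) (y j) = ∑ i, (p i : ℂ) • β (x i) (y i) := by
    rw [Finset.sum_comm, ← diag]; simp_rw [mul_comm]
  have cross := apply_weightedSum_weightedSum β hτ p p x y
  have cross' :
      ∑ i, ∑ j, (p i * p j : ℂ) • β (x j) (y i) = β (weightedSum p x) (weightedSum p y) := by
    rw [Finset.sum_comm, cross]; simp_rw [mul_comm]
  simp only [map_sub, LinearMap.sub_apply, smul_sub, Finset.sum_sub_distrib]
  rw [diag, diag', ← cross, cross']
  module

noncomputable def mixVec (p : ι → ℝ) (x y : ι → M) : ι ⊕ Unit ⊕ ι × ι → M :=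
  Sum.elim (x + y) (Sum.elim (fun _ => weightedSum p x + weightedSum p y)
    fun ij => (x - y) ij.1 - (x - y) ij.2)

theorem sum_mixWeight_smul_apply_mixVec (hτ : ∀ r : ℝ, τ r = r) {p : ι → ℝ} (hp : ∑ i, p i = 1)
    (x₁ x₂ : ι → M) (y₁ y₂ : ι → N) :
    ∑ k, (mixWeight p k : ℂ) • β (mixVec p x₁ x₂ k) (mixVec p y₁ y₂ k)
      = (2 : ℂ)⁻¹ • ∑ i, (p i : ℂ) • (β (x₁ i) (y₁ i) + β (x₂ i) (y₂ i))
        + (2 : ℂ)⁻¹ • (β (weightedSum p x₁) (weightedSum p y₂)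
          + β (weightedSum p x₂) (weightedSum p y₁)) := by
  set X₁ := weightedSum p x₁
  set X₂ := weightedSum p x₂
  set Y₁ := weightedSum p y₁
  set Y₂ := weightedSum p y₂
  have diagonal : ∀ i, ((p i / 4 : ℝ) : ℂ) • β (x₁ i + x₂ i) (y₁ i + y₂ i)
      = (2 : ℂ)⁻¹ • ((p i : ℂ) • (β (x₁ i) (y₁ i) + β (x₂ i) (y₂ i)))
        - (4 : ℂ)⁻¹ • ((p i : ℂ) • β ((x₁ - x₂) i) ((y₁ - y₂) i)) := by
    intro i
    simp only [Pi.sub_apply, map_add, map_sub, LinearMap.add_apply, LinearMap.sub_apply]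
    push_cast
    module
  have mean : ((1 / 4 : ℝ) : ℂ) • β (X₁ + X₂) (Y₁ + Y₂)
      = (2 : ℂ)⁻¹ • (β X₁ Y₂ + β X₂ Y₁) + (4 : ℂ)⁻¹ • β (X₁ - X₂) (Y₁ - Y₂) := by
    simp only [map_add, map_sub, LinearMap.add_apply, LinearMap.sub_apply]
    push_cast
    module
  have spread : ∑ i, ∑ j, ((p i * p j / 8 : ℝ) : ℂ)
        • β ((x₁ - x₂) i - (x₁ - x₂) j) ((y₁ - y₂) i - (y₁ - y₂) j)
      = (4 : ℂ)⁻¹ • (∑ i, (p i : ℂ) • β ((x₁ - x₂) i) ((y₁ - y₂) i) - β (X₁ - X₂) (Y₁ - Y₂)) := by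
    have h := sum_sum_smul_apply_sub_sub β hτ hp (x₁ - x₂) (y₁ - y₂)
    rw [weightedSum_sub, weightedSum_sub] at h
    calc _ = (8 : ℂ)⁻¹ • ∑ i, ∑ j, (p i * p j : ℂ)
          • β ((x₁ - x₂) i - (x₁ - x₂) j) ((y₁ - y₂) i - (y₁ - y₂) j) := by
          simp only [Finset.smul_sum, smul_smul]
          push_cast
          ring_nf
      _ = _ := by rw [h]; module
  simp only [Fintype.sum_sum_type, Fintype.sum_prod_type, Fintype.sum_unique, mixWeight, mixVec,
    Sum.elim_inl, Sum.elim_inr, Pi.add_apply]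
  rw [Finset.sum_congr rfl fun i _ => diagonal i, mean, spread, Finset.sum_sub_distrib,
    ← Finset.smul_sum, ← Finset.smul_sum]
  module

end Mixing

section HilbertSchmidtMixing
variable {ι n : Type*} [Fintype ι] [Fintype n]

theorem sum_mixWeight_mul_hsNorm_sq {p : ι → ℝ} (hp : ∑ i, p i = 1) (x₁ x₂ : ι → Matrix n n ℂ) :
    ∑ k, mixWeight p k * hsNorm (mixVec p x₁ x₂ k) ^ 2
      = ∑ i, p i / 2 * (hsNorm (x₁ i) ^ 2 + hsNorm (x₂ i) ^ 2)
        + (hsInner (weightedSum p x₁) (weightedSum p x₂)).re := by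
  have h := congrArg Complex.re
    (sum_mixWeight_smul_apply_mixVec hsInnerₛₗ Complex.conj_ofReal hp x₁ x₂ x₁ x₂)
  rw [show (2 : ℂ)⁻¹ = ((2⁻¹ : ℝ) : ℂ) by norm_num] at h
  simp only [hsInnerₛₗ_apply, hsInner_comm (weightedSum p x₁), Complex.re_sum, smul_eq_mul,
    Complex.re_ofReal_mul, Complex.add_re, Complex.conj_re] at h
  simp only [hsNorm_sq, h, Finset.mul_sum]
  ring_nf

theorem sum_mixWeight_mul_hsNorm_sq_le {p : ι → ℝ} (hp₀ : ∀ i, 0 ≤ p i) (hp : ∑ i, p i = 1)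
    {x₁ x₂ : ι → Matrix n n ℂ} {ε : ℝ} (hx : ∀ i, hsNorm (x₁ i) ^ 2 + hsNorm (x₂ i) ^ 2 ≤ 2 * ε) :
    ∑ k, mixWeight p k * hsNorm (mixVec p x₁ x₂ k) ^ 2
      ≤ ε + (hsInner (weightedSum p x₁) (weightedSum p x₂)).re := by
  rw [sum_mixWeight_mul_hsNorm_sq hp]
  gcongr
  calc ∑ i, p i / 2 * (hsNorm (x₁ i) ^ 2 + hsNorm (x₂ i) ^ 2)
      ≤ ∑ i, p i / 2 * (2 * ε) :=
        Finset.sum_le_sum fun i _ => mul_le_mul_of_nonneg_left (hx i) (by linarith [hp₀ i])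
    _ = ε := by rw [← Finset.sum_mul, ← Finset.sum_div, hp]; ring

end HilbertSchmidtMixing

section CrossNorm
variable {NA NB : ℕ} {κ : Type*} [Fintype κ]

theorem ccn_sum_kronecker_le (A : κ → Matrix (Fin NA) (Fin NA) ℂ)
    (B : κ → Matrix (Fin NB) (Fin NB) ℂ) :
    ccn (∑ k, A k ⊗ₖ B k) ≤ ∑ k, hsNorm (A k) * hsNorm (B k) := by
  let e := Fintype.equivFin κ
  refine csInf_le ⟨0, ?_⟩ ⟨Fintype.card κ, A ∘ e.symm, B ∘ e.symm, ?_, ?_⟩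
  · rintro r ⟨n, A', B', -, rfl⟩
    exact Finset.sum_nonneg fun k _ => mul_nonneg (hsNorm_nonneg _) (hsNorm_nonneg _)
  · exact (e.symm.sum_comp fun k => A k ⊗ₖ B k).symm
  · exact (e.symm.sum_comp fun k => hsNorm (A k) * hsNorm (B k)).symm

theorem ccn_sum_smul_kronecker_le {w : κ → ℝ} (hw : ∀ k, 0 ≤ w k)
    (A : κ → Matrix (Fin NA) (Fin NA) ℂ) (B : κ → Matrix (Fin NB) (Fin NB) ℂ) :
    ccn (∑ k, (w k : ℂ) • (A k ⊗ₖ B k))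
      ≤ √(∑ k, w k * hsNorm (A k) ^ 2) * √(∑ k, w k * hsNorm (B k) ^ 2) := by
  have term : ∀ k, hsNorm ((w k : ℂ) • A k) * hsNorm (B k)
      = √(w k * hsNorm (A k) ^ 2) * √(w k * hsNorm (B k) ^ 2) := by
    intro k
    rw [hsNorm_smul, Complex.norm_real, Real.norm_of_nonneg (hw k), Real.sqrt_mul (hw k),
      Real.sqrt_mul (hw k),
      Real.sqrt_sq (hsNorm_nonneg _), Real.sqrt_sq (hsNorm_nonneg _)]
    linear_combination -(hsNorm (A k) * hsNorm (B k)) * Real.mul_self_sqrt (hw k)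
  simp_rw [← smul_kronecker]
  refine (ccn_sum_kronecker_le _ _).trans ?_
  simp_rw [term]
  exact Real.sum_sqrt_mul_sqrt_le _ (fun k => mul_nonneg (hw k) (sq_nonneg _))
    fun k => mul_nonneg (hw k) (sq_nonneg _)

end CrossNorm

@[simp]
theorem Matrix.kroneckerBilinear_apply_apply {R α l m n p : Type*} [CommSemiring R] [Semiring α]
    [Algebra R α] (A : Matrix l m α) (B : Matrix n p α) :
    kroneckerBilinear (R := R) A B = A ⊗ₖ B :=
  rfl

section Bipartite
variable {NA NB : ℕ} {σ : ℂ →+* ℂ}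
  (F : Matrix (Fin NA) (Fin NA) ℂ →ₛₗ[σ] Matrix (Fin NA) (Fin NA) ℂ)
  (G : Matrix (Fin NB) (Fin NB) ℂ →ₛₗ[σ] Matrix (Fin NB) (Fin NB) ℂ)

@[simps]
noncomputable def tensorApplyₛₗ :
    Matrix (Fin NA × Fin NB) (Fin NA × Fin NB) ℂ →ₛₗ[σ]
      Matrix (Fin NA × Fin NB) (Fin NA × Fin NB) ℂ where
  toFun := tensorApply F G
  map_add' M N := by
    simp only [tensorApply, ← Finset.sum_add_distrib, ← add_kronecker, ← map_add]
    rfl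
  map_smul' c M := by
    simp only [tensorApply, Finset.smul_sum, ← smul_kronecker, ← map_smulₛₗ]
    rfl

theorem tensorApply_kronecker (A : Matrix (Fin NA) (Fin NA) ℂ) (B : Matrix (Fin NB) (Fin NB) ℂ) :
    tensorApply F G (A ⊗ₖ B) = F A ⊗ₖ G B := by
  have block : ∀ b b', (of fun i i' => (A ⊗ₖ B) (i, b) (i', b')) = B b b' • A := by
    intro b b'; ext i i'; simp [mul_comm]
  have expand : G B = ∑ b, ∑ b', σ (B b b') • G (single b b' 1) := by
    conv_lhs => rw [matrix_eq_sum_single B]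
    simp only [map_sum, ← map_smulₛₗ, smul_single, smul_eq_mul, mul_one]
  rw [expand]
  simp only [tensorApply, block, map_smulₛₗ, smul_kronecker]
  simp only [← kroneckerBilinear_apply_apply (R := ℂ), map_sum, map_smul]

theorem tensorApply_weightedSum_kronecker (hσ : ∀ r : ℝ, σ r = r) {ι : Type*} [Fintype ι]
    (p : ι → ℝ) (A : ι → Matrix (Fin NA) (Fin NA) ℂ) (B : ι → Matrix (Fin NB) (Fin NB) ℂ) :
    tensorApply F G (weightedSum p fun i => A i ⊗ₖ B i)
      = weightedSum p fun i => F (A i) ⊗ₖ G (B i) := by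
  rw [← tensorApplyₛₗ_apply, map_weightedSum hσ]
  simp only [Function.comp_def, tensorApplyₛₗ_apply, tensorApply_kronecker]

end Bipartite

section Marginals
variable {NA NB : ℕ} {ι : Type*} [Fintype ι]

theorem margA_weightedSum_kronecker (p : ι → ℝ) (A : ι → Matrix (Fin NA) (Fin NA) ℂ)
    {B : ι → Matrix (Fin NB) (Fin NB) ℂ} (hB : ∀ i, (B i).trace = 1) :
    margA (weightedSum p fun i => A i ⊗ₖ B i) = weightedSum p A := by
  ext a a'
  simp only [margA, weightedSum, of_apply, Matrix.sum_apply, Matrix.smul_apply, kronecker_apply,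
    smul_eq_mul]
  rw [Finset.sum_comm]
  refine Finset.sum_congr rfl fun i _ => ?_
  simp only [← mul_assoc, ← Finset.mul_sum]
  rw [show ∑ b, B i b b = 1 from hB i, mul_one]

theorem margB_weightedSum_kronecker (p : ι → ℝ) {A : ι → Matrix (Fin NA) (Fin NA) ℂ}
    (B : ι → Matrix (Fin NB) (Fin NB) ℂ) (hA : ∀ i, (A i).trace = 1) :
    margB (weightedSum p fun i => A i ⊗ₖ B i) = weightedSum p B := by
  ext b b'
  simp only [margB, weightedSum, of_apply, Matrix.sum_apply, Matrix.smul_apply, kronecker_apply,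
    smul_eq_mul]
  rw [Finset.sum_comm]
  refine Finset.sum_congr rfl fun i _ => ?_
  simp only [mul_comm (A i _ _), ← mul_assoc, ← Finset.mul_sum]
  rw [show ∑ a, A i a a = 1 from hA i, mul_one]

end Marginals

theorem stmt15_main_theorem_two_maps_general {NA NB : ℕ}
    (σ : ℂ →+* ℂ) (hσ : σ = RingHom.id ℂ ∨ σ = starRingEnd ℂ)
    (EA1 EA2 : Matrix (Fin NA) (Fin NA) ℂ →ₛₗ[σ] Matrix (Fin NA) (Fin NA) ℂ)
    (EB1 EB2 : Matrix (Fin NB) (Fin NB) ℂ →ₛₗ[σ] Matrix (Fin NB) (Fin NB) ℂ)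
    (εA εB : ℝ)
    (hboundA : ∀ σ1 σ2 : Matrix (Fin NA) (Fin NA) ℂ, IsDensity σ1 → IsDensity σ2 →
      hsNorm (EA1 σ1) ^ 2 + hsNorm (EA2 σ2) ^ 2 ≤ 2 * εA)
    (hboundB : ∀ σ1 σ2 : Matrix (Fin NB) (Fin NB) ℂ, IsDensity σ1 → IsDensity σ2 →
      hsNorm (EB1 σ1) ^ 2 + hsNorm (EB2 σ2) ^ 2 ≤ 2 * εB)
    (ρ : Matrix (Fin NA × Fin NB) (Fin NA × Fin NB) ℂ)
    (hsep : IsSeparableState ρ) :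
    ccn ((2 : ℂ)⁻¹ • (tensorApply EA1 EB1 ρ + tensorApply EA2 EB2 ρ)
        + (2 : ℂ)⁻¹ • (tensorApply EA1 EB2 (margA ρ ⊗ₖ margB ρ)
            + tensorApply EA2 EB1 (margA ρ ⊗ₖ margB ρ)))
      ≤ Real.sqrt (εA + (hsInner (EA1 (margA ρ)) (EA2 (margA ρ))).re)
          * Real.sqrt (εB + (hsInner (EB1 (margB ρ)) (EB2 (margB ρ))).re) := by
  obtain ⟨m, p, ρA, ρB, hp₀, hp, hρA, hρB, hρ⟩ := hsep
  replace hρ : ρ = weightedSum p fun i => ρA i ⊗ₖ ρB i := hρ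
  subst hρ
  have hσ_real : ∀ r : ℝ, σ r = r := by rcases hσ with rfl | rfl <;> simp
  rw [margA_weightedSum_kronecker p ρA fun i => (hρB i).2,
    margB_weightedSum_kronecker p ρB fun i => (hρA i).2,
    tensorApply_kronecker, tensorApply_kronecker,
    tensorApply_weightedSum_kronecker _ _ hσ_real, tensorApply_weightedSum_kronecker _ _ hσ_real,
    map_weightedSum hσ_real, map_weightedSum hσ_real, map_weightedSum hσ_real,
    map_weightedSum hσ_real]
  have decomposition :=
    sum_mixWeight_smul_apply_mixVec (kroneckerBilinear (R := ℂ)) (fun _ => rfl) hp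
      (EA1 ∘ ρA) (EA2 ∘ ρA) (EB1 ∘ ρB) (EB2 ∘ ρB)
  simp only [kroneckerBilinear_apply_apply] at decomposition
  have energyA := sum_mixWeight_mul_hsNorm_sq_le (fun i => (hp₀ i).le) hp
    fun i => hboundA _ _ (hρA i) (hρA i)
  have energyB := sum_mixWeight_mul_hsNorm_sq_le (fun i => (hp₀ i).le) hp
    fun i => hboundB _ _ (hρB i) (hρB i)
  calc _ = ccn (∑ k, (mixWeight p k : ℂ)
          • (mixVec p (EA1 ∘ ρA) (EA2 ∘ ρA) k ⊗ₖ mixVec p (EB1 ∘ ρB) (EB2 ∘ ρB) k)) := by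
        rw [decomposition, ← weightedSum_add]; rfl
    _ ≤ _ := ccn_sum_smul_kronecker_le (mixWeight_nonneg fun i => (hp₀ i).le) _ _
    _ ≤ _ := by gcongr <;> assumption

/-- The n = 2 case of the main theorem. -/
theorem stmt15_main_theorem_two_maps {NA NB : ℕ} (hA : 2 ≤ NA) (hB : 2 ≤ NB)
    (σ : ℂ →+* ℂ) (hσ : σ = RingHom.id ℂ ∨ σ = starRingEnd ℂ)
    (EA1 EA2 : Matrix (Fin NA) (Fin NA) ℂ →ₛₗ[σ] Matrix (Fin NA) (Fin NA) ℂ)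
    (EB1 EB2 : Matrix (Fin NB) (Fin NB) ℂ →ₛₗ[σ] Matrix (Fin NB) (Fin NB) ℂ)
    (εA εB : ℝ) (hεA : 0 ≤ εA) (hεB : 0 ≤ εB)
    (hboundA : ∀ σ1 σ2 : Matrix (Fin NA) (Fin NA) ℂ, IsDensity σ1 → IsDensity σ2 →
      hsNorm (EA1 σ1) ^ 2 + hsNorm (EA2 σ2) ^ 2 ≤ 2 * εA)
    (hboundB : ∀ σ1 σ2 : Matrix (Fin NB) (Fin NB) ℂ, IsDensity σ1 → IsDensity σ2 →
      hsNorm (EB1 σ1) ^ 2 + hsNorm (EB2 σ2) ^ 2 ≤ 2 * εB)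
    (ρ : Matrix (Fin NA × Fin NB) (Fin NA × Fin NB) ℂ)
    (hsep : IsSeparableState ρ) :
    ccn ((2 : ℂ)⁻¹ • (tensorApply EA1 EB1 ρ + tensorApply EA2 EB2 ρ)
        + (2 : ℂ)⁻¹ • (tensorApply EA1 EB2 (margA ρ ⊗ₖ margB ρ)
            + tensorApply EA2 EB1 (margA ρ ⊗ₖ margB ρ)))
      ≤ Real.sqrt (εA + (hsInner (EA1 (margA ρ)) (EA2 (margA ρ))).re)
          * Real.sqrt (εB + (hsInner (EB1 (margB ρ)) (EB2 (margB ρ))).re) :=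
  stmt15_main_theorem_two_maps_general σ hσ EA1 EA2 EB1 EB2 εA εB hboundA hboundB ρ hsep
end
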